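/- arXiv:2209.11400 — 2 statements merged into one kernel-verified Lean document; each statement's English description precedes it below -/
import Mathlib

section
/- Suppose X takes values in a finite set 𝒳, treatment Z is binary, and for each i the observed outcome satisfies Y_i is defined. Assume for every x ∈ 𝒳 both N_{x,1} > 0 and N_{x,0} > 0, where N_{x,z} counts observations with X_i = x, Z_i = z. Define the empirical propensity π̂(x) = N_{x,1}/N_x. Then the IPW estimator (1/n)∑_i (Y_i Z_i / π̂(X_i) − Y_i(1−Z_i)/(1−π̂(X_i))) equals the full stratification estimator ∑_{x∈𝒳} (N_x/n)(Ȳ_{x,1} − Ȳ_{x,0}), where Ȳ_{x,z} is the sample mean of Y among observations with X_i = x, Z_i = z. -/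
open Finset

open Classical in
/-- With discrete covariates and every stratum containing both treated and control units,
the IPW estimator with nonparametrically estimated propensity scores
`π̂(x) = N_{x,1}/N_x` coincides with the full stratification estimator. -/
theorem stmt_7 {𝒳 : Type*} [Fintype 𝒳] (n : ℕ) (hn : 0 < n)
    (X : Fin n → 𝒳) (Z : Fin n → Fin 2) (Y : Fin n → ℝ)
    (Nxz : 𝒳 → Fin 2 → ℕ)
    (hNxz : ∀ x z, Nxz x z = (Finset.univ.filter fun i => X i = x ∧ Z i = z).card)
    (Nx : 𝒳 → ℕ) (hNx : ∀ x, Nx x = (Finset.univ.filter fun i => X i = x).card)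
    (hpos : ∀ x : 𝒳, 0 < Nxz x 1 ∧ 0 < Nxz x 0)
    (πhat : 𝒳 → ℝ) (hπhat : ∀ x, πhat x = (Nxz x 1 : ℝ) / (Nx x : ℝ))
    (Ybar : 𝒳 → Fin 2 → ℝ)
    (hYbar : ∀ x z, Ybar x z =
      (∑ i ∈ Finset.univ.filter (fun i => X i = x ∧ Z i = z), Y i) / (Nxz x z : ℝ)) :
    (1 / (n : ℝ)) * ∑ i, (Y i * (Z i : ℝ) / πhat (X i) -
        Y i * (1 - (Z i : ℝ)) / (1 - πhat (X i))) =
      ∑ x : 𝒳, ((Nx x : ℝ) / (n : ℝ)) * (Ybar x 1 - Ybar x 0) := by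
  have hzcases : ∀ i : Fin n, Z i = 0 ∨ Z i = 1 := fun i => by omega
  have hN1 : ∀ x, (0:ℝ) < (Nxz x 1 : ℝ) := fun x => by exact_mod_cast (hpos x).1
  have hN0 : ∀ x, (0:ℝ) < (Nxz x 0 : ℝ) := fun x => by exact_mod_cast (hpos x).2
  have hNxeq : ∀ x, Nx x = Nxz x 0 + Nxz x 1 := by
    intro x
    rw [hNx, hNxz, hNxz]
    rw [← Finset.card_union_of_disjoint]
    · congr 1
      ext i
      simp only [mem_union, mem_filter, mem_univ, true_and]
      constructor
      · intro h
        rcases hzcases i with h0 | h1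
        · exact Or.inl ⟨h, h0⟩
        · exact Or.inr ⟨h, h1⟩
      · rintro (⟨h, -⟩ | ⟨h, -⟩) <;> exact h
    · rw [Finset.disjoint_left]
      rintro i hi hi'
      simp only [mem_filter, mem_univ, true_and] at hi hi'
      rw [hi.2] at hi'
      exact absurd hi'.2 (by decide)
  have hNpos : ∀ x, (0:ℝ) < (Nx x : ℝ) := by
    intro x
    rw [hNxeq]
    push_cast
    linarith [hN0 x, hN1 x]
  have hπ1 : ∀ x, 1 - πhat x = (Nxz x 0 : ℝ) / (Nx x : ℝ) := by
    intro x
    rw [hπhat x]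
    have h := (hNpos x).ne'
    have h2 : (Nx x : ℝ) = (Nxz x 0 : ℝ) + (Nxz x 1 : ℝ) := by
      rw [hNxeq]; push_cast; ring
    field_simp
    linarith [h2]
  have hsum : ∀ x, ∑ i ∈ univ.filter (fun i => X i = x),
      (Y i * (Z i : ℝ) / πhat (X i) - Y i * (1 - (Z i : ℝ)) / (1 - πhat (X i)))
      = (Nx x : ℝ) * (Ybar x 1 - Ybar x 0) := by
    intro x
    rw [← Finset.sum_filter_add_sum_filter_not (univ.filter fun i => X i = x)
        (fun i => Z i = 1), Finset.filter_filter, Finset.filter_filter]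
    have hset : (univ.filter fun i => X i = x ∧ ¬ Z i = 1)
        = univ.filter fun i => X i = x ∧ Z i = 0 := by
      ext i
      simp only [mem_filter, mem_univ, true_and]
      constructor
      · rintro ⟨h, hz⟩
        exact ⟨h, (hzcases i).resolve_right hz⟩
      · rintro ⟨h, hz⟩
        exact ⟨h, by rw [hz]; decide⟩
    rw [hset]
    have hterm1 : ∀ i ∈ univ.filter (fun i => X i = x ∧ Z i = 1),
        Y i * (Z i : ℝ) / πhat (X i) - Y i * (1 - (Z i : ℝ)) / (1 - πhat (X i))
        = Y i * ((Nx x : ℝ) / (Nxz x 1 : ℝ)) := by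
      intro i hi
      simp only [mem_filter, mem_univ, true_and] at hi
      obtain ⟨hx, hz⟩ := hi
      rw [hx, hz, hπhat x]
      simp only [Fin.val_one, Nat.cast_one, sub_self, mul_zero, zero_div, sub_zero,
        mul_one]
      rw [div_div_eq_mul_div]
      ring
    have hterm0 : ∀ i ∈ univ.filter (fun i => X i = x ∧ Z i = 0),
        Y i * (Z i : ℝ) / πhat (X i) - Y i * (1 - (Z i : ℝ)) / (1 - πhat (X i))
        = Y i * (-((Nx x : ℝ) / (Nxz x 0 : ℝ))) := by
      intro i hi
      simp only [mem_filter, mem_univ, true_and] at hi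
      obtain ⟨hx, hz⟩ := hi
      rw [hx, hz, hπ1 x]
      simp only [Fin.val_zero, Nat.cast_zero, mul_zero, zero_div, sub_zero, zero_sub,
        sub_zero, mul_one]
      rw [div_div_eq_mul_div]
      ring
    rw [Finset.sum_congr rfl hterm1, Finset.sum_congr rfl hterm0,
      ← Finset.sum_mul, ← Finset.sum_mul, hYbar, hYbar]
    have h1 := (hN1 x).ne'
    have h0 := (hN0 x).ne'
    field_simp
    ring
  rw [← Finset.sum_fiberwise Finset.univ X
    (fun i => Y i * (Z i : ℝ) / πhat (X i) - Y i * (1 - (Z i : ℝ)) / (1 - πhat (X i))),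
    Finset.mul_sum]
  refine Finset.sum_congr rfl fun x _ => ?_
  rw [hsum x]
  ring
end

section
/- Let σ > 0, τ ∈ ℝ, and for z ∈ {0,1} let w_z ∈ (0,1) with w_1 ≠ w_0. Define F_z(y) = w_z·Φ((y − τz)/(σ+1)) + (1−w_z)·Φ((y − τz)/σ) and G_z(y) = (1/2)·Φ((y − τz)/(σ+1)) + (1/2)·Φ((y − τz)/σ), where Φ is the standard normal CDF. Then G_1^{-1}(q) − G_0^{-1}(q) = τ for all q ∈ (0,1), but there exists q ∈ (0,1) with F_1^{-1}(q) − F_0^{-1}(q) ≠ τ. -/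
open MeasureTheory Real Set Filter

/-- The standard normal cumulative distribution function. -/
noncomputable def stdNormalCDF (y : ℝ) : ℝ :=
  ∫ u in Set.Iic y, Real.exp (-u ^ 2 / 2) / Real.sqrt (2 * Real.pi)

/-- The generalized inverse (quantile function) of a CDF. -/
noncomputable def quantileFn (F : ℝ → ℝ) (q : ℝ) : ℝ :=
  sInf {y : ℝ | q ≤ F y}

noncomputable def gaussPDF (u : ℝ) : ℝ := Real.exp (-u ^ 2 / 2) / Real.sqrt (2 * Real.pi)

lemma gaussPDF_cont : Continuous gaussPDF := by
  unfold gaussPDF; fun_prop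

lemma gaussPDF_pos (u : ℝ) : 0 < gaussPDF u :=
  div_pos (Real.exp_pos _) (Real.sqrt_pos.2 (by positivity))

lemma gaussPDF_integrable : Integrable gaussPDF := by
  have h : gaussPDF = fun u => Real.exp (-(1/2) * u ^ 2) / Real.sqrt (2 * Real.pi) := by
    funext u; unfold gaussPDF; ring_nf
  rw [h]
  exact (integrable_exp_neg_mul_sq (by norm_num)).div_const _

lemma gaussPDF_integral : ∫ u, gaussPDF u = 1 := by
  have h : gaussPDF = fun u => Real.exp (-(1/2) * u ^ 2) / Real.sqrt (2 * Real.pi) := by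
    funext u; unfold gaussPDF; ring_nf
  rw [h, integral_div, integral_gaussian]
  rw [show Real.pi / (1/2) = 2 * Real.pi by ring]
  exact div_self (by positivity)

lemma stdNormalCDF_eq (y : ℝ) : stdNormalCDF y = ∫ u in Set.Iic y, gaussPDF u := rfl

lemma stdNormalCDF_sub (x y : ℝ) :
    stdNormalCDF y - stdNormalCDF x = ∫ u in x..y, gaussPDF u := by
  rw [stdNormalCDF_eq, stdNormalCDF_eq]
  exact intervalIntegral.integral_Iic_sub_Iic gaussPDF_integrable.integrableOn
    gaussPDF_integrable.integrableOn

lemma stdNormalCDF_strictMono : StrictMono stdNormalCDF := by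
  intro x y hxy
  have h := stdNormalCDF_sub x y
  have hpos : 0 < ∫ u in x..y, gaussPDF u :=
    intervalIntegral.intervalIntegral_pos_of_pos (gaussPDF_integrable.intervalIntegrable)
      gaussPDF_pos hxy
  linarith

lemma stdNormalCDF_continuous : Continuous stdNormalCDF := by
  have : stdNormalCDF = fun y => (∫ u in (0:ℝ)..y, gaussPDF u) + stdNormalCDF 0 := by
    funext y; have := stdNormalCDF_sub 0 y; unfold stdNormalCDF at *; linarith
  rw [this]
  exact (intervalIntegral.continuous_primitive
    (fun a b => gaussPDF_integrable.intervalIntegrable) 0).add continuous_const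

lemma stdNormalCDF_tendsto_atTop : Tendsto stdNormalCDF atTop (nhds 1) := by
  have := (MeasureTheory.aecover_Iic (μ := volume) (l := atTop) (b := fun y : ℝ => y)
    tendsto_id).integral_tendsto_of_countably_generated gaussPDF_integrable
  rwa [gaussPDF_integral] at this

lemma stdNormalCDF_tendsto_atBot : Tendsto stdNormalCDF atBot (nhds 0) := by
  have h := MeasureTheory.intervalIntegral_tendsto_integral_Iic (μ := volume) (0:ℝ)
    gaussPDF_integrable.integrableOn (tendsto_id (x := atBot))
  have h2 : Tendsto (fun y : ℝ => stdNormalCDF 0 - ∫ u in y..(0:ℝ), gaussPDF u) atBot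
      (nhds (stdNormalCDF 0 - ∫ u in Iic (0:ℝ), gaussPDF u)) :=
    tendsto_const_nhds.sub h
  have h3 : (fun y : ℝ => stdNormalCDF 0 - ∫ u in y..(0:ℝ), gaussPDF u) = stdNormalCDF := by
    funext y; have := stdNormalCDF_sub y 0; linarith
  rw [h3] at h2
  have : stdNormalCDF 0 - ∫ u in Iic (0:ℝ), gaussPDF u = 0 := by
    rw [stdNormalCDF_eq]; ring
  rwa [this] at h2

lemma stdNormalCDF_lt_one (x : ℝ) : stdNormalCDF x < 1 := by
  have h1 : stdNormalCDF (x + 1) ≤ 1 :=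
    stdNormalCDF_strictMono.monotone.ge_of_tendsto stdNormalCDF_tendsto_atTop (x + 1)
  have := stdNormalCDF_strictMono (lt_add_one x)
  linarith

lemma stdNormalCDF_pos (x : ℝ) : 0 < stdNormalCDF x := by
  have h1 : 0 ≤ stdNormalCDF (x - 1) :=
    stdNormalCDF_strictMono.monotone.le_of_tendsto stdNormalCDF_tendsto_atBot (x - 1)
  have := stdNormalCDF_strictMono (sub_one_lt x)
  linarith

section Mix
variable {H : ℝ → ℝ} {w c s1 s2 : ℝ}

lemma mix_strictMono (hH : ∀ y, H y = w * stdNormalCDF ((y - c) / s1)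
      + (1 - w) * stdNormalCDF ((y - c) / s2))
    (hs1 : 0 < s1) (hs2 : 0 < s2) (hw : 0 < w) (hw1 : w < 1) : StrictMono H := by
  intro x y hxy
  rw [hH, hH]
  have h1 : stdNormalCDF ((x - c) / s1) < stdNormalCDF ((y - c) / s1) :=
    stdNormalCDF_strictMono (div_lt_div_of_pos_right (by linarith) hs1)
  have h2 : stdNormalCDF ((x - c) / s2) < stdNormalCDF ((y - c) / s2) :=
    stdNormalCDF_strictMono (div_lt_div_of_pos_right (by linarith) hs2)
  have := mul_lt_mul_of_pos_left h1 hw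
  have := mul_lt_mul_of_pos_left h2 (by linarith : (0:ℝ) < 1 - w)
  linarith

lemma mix_continuous (hH : ∀ y, H y = w * stdNormalCDF ((y - c) / s1)
      + (1 - w) * stdNormalCDF ((y - c) / s2)) : Continuous H := by
  have : H = fun y => w * stdNormalCDF ((y - c) / s1) + (1 - w) * stdNormalCDF ((y - c) / s2) :=
    funext hH
  rw [this]
  exact (continuous_const.mul (stdNormalCDF_continuous.comp (by fun_prop))).add
    (continuous_const.mul (stdNormalCDF_continuous.comp (by fun_prop)))

lemma mix_tendsto_atTop (hH : ∀ y, H y = w * stdNormalCDF ((y - c) / s1)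
      + (1 - w) * stdNormalCDF ((y - c) / s2))
    (hs1 : 0 < s1) (hs2 : 0 < s2) : Tendsto H atTop (nhds 1) := by
  have harg : ∀ s : ℝ, 0 < s → Tendsto (fun y : ℝ => (y - c) / s) atTop atTop := fun s hs =>
    (tendsto_atTop_add_const_right atTop (-c) tendsto_id).atTop_div_const hs
  have h1 := stdNormalCDF_tendsto_atTop.comp (harg s1 hs1)
  have h2 := stdNormalCDF_tendsto_atTop.comp (harg s2 hs2)
  have := (h1.const_mul w).add (h2.const_mul (1 - w))
  have heq : H = fun y => w * stdNormalCDF ((y - c) / s1)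
      + (1 - w) * stdNormalCDF ((y - c) / s2) := funext hH
  rw [heq]
  convert this using 2 <;> simp <;> ring

lemma mix_tendsto_atBot (hH : ∀ y, H y = w * stdNormalCDF ((y - c) / s1)
      + (1 - w) * stdNormalCDF ((y - c) / s2))
    (hs1 : 0 < s1) (hs2 : 0 < s2) : Tendsto H atBot (nhds 0) := by
  have harg : ∀ s : ℝ, 0 < s → Tendsto (fun y : ℝ => (y - c) / s) atBot atBot := fun s hs =>
    (tendsto_atBot_add_const_right atBot (-c) tendsto_id).atBot_div_const hs
  have h1 := stdNormalCDF_tendsto_atBot.comp (harg s1 hs1)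
  have h2 := stdNormalCDF_tendsto_atBot.comp (harg s2 hs2)
  have := (h1.const_mul w).add (h2.const_mul (1 - w))
  have heq : H = fun y => w * stdNormalCDF ((y - c) / s1)
      + (1 - w) * stdNormalCDF ((y - c) / s2) := funext hH
  rw [heq]
  convert this using 2 <;> simp <;> ring

end Mix

section Quantile
variable {H : ℝ → ℝ} {q a τ : ℝ}

lemma qset_nonempty (ht : Tendsto H atTop (nhds 1)) (hq1 : q < 1) :
    {y | q ≤ H y}.Nonempty := by
  obtain ⟨y, hy⟩ := (ht.eventually (lt_mem_nhds hq1)).exists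
  exact ⟨y, hy.le⟩

lemma qset_bddBelow (hb : Tendsto H atBot (nhds 0)) (hq0 : 0 < q) :
    BddBelow {y | q ≤ H y} := by
  obtain ⟨b, hb'⟩ := Filter.eventually_atBot.1 (hb.eventually (gt_mem_nhds hq0))
  refine ⟨b, fun y hy => ?_⟩
  by_contra hlt
  push_neg at hlt
  exact absurd hy (not_le.2 (hb' y hlt.le))

lemma quantileFn_shift (hne : {y | q ≤ H y}.Nonempty) (hbdd : BddBelow {y | q ≤ H y}) :
    quantileFn (fun y => H (y - τ)) q = quantileFn H q + τ := by
  have himg : {y | q ≤ H (y - τ)} = (fun y => y + τ) '' {y | q ≤ H y} := by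
    ext y
    simp only [Set.mem_image, Set.mem_setOf_eq]
    exact ⟨fun h => ⟨y - τ, h, by ring⟩, fun ⟨x, hx, he⟩ => by rw [← he]; simpa using hx⟩
  have := (OrderIso.addRight τ).map_csInf' hne hbdd
  simp only [OrderIso.addRight_apply] at this
  unfold quantileFn
  rw [himg, ← this]

lemma quantileFn_eq_self (hmono : StrictMono H) (y : ℝ) : quantileFn H (H y) = y := by
  unfold quantileFn
  have : {y' | H y ≤ H y'} = Set.Ici y := by ext y'; simp [hmono.le_iff_le]
  rw [this, csInf_Ici]

lemma quantileFn_lt (hcont : Continuous H) (hbdd : BddBelow {y | q ≤ H y})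
    (ha : q < H a) : quantileFn H q < a := by
  have hopen : IsOpen (H ⁻¹' Set.Ioi q) := (isOpen_Ioi).preimage hcont
  obtain ⟨ε, hε, hball⟩ := Metric.isOpen_iff.1 hopen a ha
  have hmem : a - ε / 2 ∈ {y | q ≤ H y} := by
    have : a - ε / 2 ∈ Metric.ball a ε := by
      rw [Metric.mem_ball, Real.dist_eq, abs_lt]; constructor <;> linarith
    have h2 : H (a - ε / 2) ∈ Set.Ioi q := hball this
    exact (Set.mem_Ioi.1 h2).le
  calc quantileFn H q ≤ a - ε / 2 := csInf_le hbdd hmem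
    _ < a := by linarith

lemma quantileFn_gt (hmono : Monotone H) (hcont : Continuous H)
    (hne : {y | q ≤ H y}.Nonempty) (ha : H a < q) : a < quantileFn H q := by
  have hopen : IsOpen (H ⁻¹' Set.Iio q) := (isOpen_Iio).preimage hcont
  obtain ⟨ε, hε, hball⟩ := Metric.isOpen_iff.1 hopen a ha
  have hle : a + ε / 2 ≤ quantileFn H q := by
    apply le_csInf hne
    intro y hy
    by_contra hlt
    push_neg at hlt
    rcases le_or_gt y (a - ε) with h | h
    · exact absurd (le_trans hy (hmono (by linarith))) (not_le.2 ha)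
    · have : y ∈ Metric.ball a ε := by
        rw [Metric.mem_ball, Real.dist_eq, abs_lt]; constructor <;> linarith
      have h2 : H y ∈ Set.Iio q := hball this
      exact absurd hy (not_le.2 (Set.mem_Iio.1 h2))
  linarith

end Quantile


/-- Quantile treatment effects are confounded even when the ATE is not: the
potential-outcome mixture CDFs `G_z` (weights `1/2, 1/2`) have quantile
differences identically `τ`, but the observed-outcome mixture CDFs `F_z`
(weights `w_z ≠ w_{1−z}`) have a quantile difference `≠ τ` at some quantile. -/
theorem stmt_16 (σ τ : ℝ) (hσ : 0 < σ)
    (w₀ w₁ : ℝ) (hw₀ : w₀ ∈ Set.Ioo (0 : ℝ) 1) (hw₁ : w₁ ∈ Set.Ioo (0 : ℝ) 1)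
    (hw : w₁ ≠ w₀)
    (F₀ F₁ G₀ G₁ : ℝ → ℝ)
    (hF₀ : ∀ y, F₀ y = w₀ * stdNormalCDF (y / (σ + 1)) + (1 - w₀) * stdNormalCDF (y / σ))
    (hF₁ : ∀ y, F₁ y = w₁ * stdNormalCDF ((y - τ) / (σ + 1)) +
      (1 - w₁) * stdNormalCDF ((y - τ) / σ))
    (hG₀ : ∀ y, G₀ y = (1 / 2) * stdNormalCDF (y / (σ + 1)) +
      (1 / 2) * stdNormalCDF (y / σ))
    (hG₁ : ∀ y, G₁ y = (1 / 2) * stdNormalCDF ((y - τ) / (σ + 1)) +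
      (1 / 2) * stdNormalCDF ((y - τ) / σ)) :
    (∀ q ∈ Set.Ioo (0 : ℝ) 1, quantileFn G₁ q - quantileFn G₀ q = τ) ∧
      ∃ q ∈ Set.Ioo (0 : ℝ) 1, quantileFn F₁ q - quantileFn F₀ q ≠ τ := by
  obtain ⟨hw₀0, hw₀1⟩ := hw₀
  obtain ⟨hw₁0, hw₁1⟩ := hw₁
  have hs1 : (0:ℝ) < σ + 1 := by linarith
  have hF₀' : ∀ y, F₀ y = w₀ * stdNormalCDF ((y - 0) / (σ + 1))
      + (1 - w₀) * stdNormalCDF ((y - 0) / σ) := by intro y; rw [hF₀]; norm_num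
  have hF₁' : ∀ y, F₁ y = w₁ * stdNormalCDF ((y - τ) / (σ + 1))
      + (1 - w₁) * stdNormalCDF ((y - τ) / σ) := hF₁
  have hG₀' : ∀ y, G₀ y = (1/2) * stdNormalCDF ((y - 0) / (σ + 1))
      + (1 - 1/2) * stdNormalCDF ((y - 0) / σ) := by intro y; rw [hG₀]; norm_num
  constructor
  · -- part 1
    intro q ⟨hq0, hq1⟩
    have hne := qset_nonempty (mix_tendsto_atTop hG₀' hs1 hσ) hq1
    have hbdd := qset_bddBelow (mix_tendsto_atBot hG₀' hs1 hσ) hq0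
    have hG1eq : G₁ = fun y => G₀ (y - τ) := by
      funext y; rw [hG₁ y, hG₀ (y - τ)]
    rw [hG1eq, quantileFn_shift hne hbdd]
    ring
  · -- part 2
    set A := stdNormalCDF (1 / (σ + 1)) with hA
    set B := stdNormalCDF (1 / σ) with hB
    have hAB : A < B := stdNormalCDF_strictMono
      (one_div_lt_one_div_of_lt hσ (lt_add_one σ))
    set q := F₀ 1 with hq
    have hqval : q = w₀ * A + (1 - w₀) * B := hF₀ 1
    have hq0 : 0 < q := by
      rw [hqval]
      have := stdNormalCDF_pos (1 / (σ + 1))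
      have := stdNormalCDF_pos (1 / σ)
      have := mul_pos hw₀0 (stdNormalCDF_pos (1 / (σ + 1)))
      have := mul_pos (by linarith : (0:ℝ) < 1 - w₀) (stdNormalCDF_pos (1 / σ))
      rw [hA, hB]
      linarith
    have hq1 : q < 1 := by
      rw [hqval]
      have h1 := mul_lt_mul_of_pos_left (stdNormalCDF_lt_one (1 / (σ + 1))) hw₀0
      have h2 := mul_lt_mul_of_pos_left (stdNormalCDF_lt_one (1 / σ))
        (by linarith : (0:ℝ) < 1 - w₀)
      rw [mul_one] at h1 h2
      rw [hA, hB]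
      linarith
    have hF1val : F₁ (1 + τ) = w₁ * A + (1 - w₁) * B := by
      rw [hF₁, hA, hB, add_sub_cancel_right]
    have hdiff : F₁ (1 + τ) - q = (w₁ - w₀) * (A - B) := by
      rw [hF1val, hqval]; ring
    have hne2 : F₁ (1 + τ) ≠ q := by
      intro h
      have := mul_ne_zero (sub_ne_zero.2 hw) (sub_ne_zero.2 (ne_of_lt hAB))
      rw [← hdiff, h, sub_self] at this
      exact this rfl
    have hQ0 : quantileFn F₀ q = 1 := quantileFn_eq_self
      (mix_strictMono hF₀' hs1 hσ hw₀0 hw₀1) 1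
    refine ⟨q, ⟨hq0, hq1⟩, ?_⟩
    rw [hQ0]
    rcases lt_or_gt_of_ne hne2 with hlt | hgt
    · -- F₁ (1+τ) < q ⇒ quantile > 1+τ
      have := quantileFn_gt (mix_strictMono hF₁' hs1 hσ hw₁0 hw₁1).monotone
        (mix_continuous hF₁') (qset_nonempty (mix_tendsto_atTop hF₁' hs1 hσ) hq1) hlt
      intro h; linarith
    · -- q < F₁ (1+τ) ⇒ quantile < 1+τ
      have := quantileFn_lt (mix_continuous hF₁')
        (qset_bddBelow (mix_tendsto_atBot hF₁' hs1 hσ) hq0) hgt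
      intro h; linarith
end
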